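/- Let k be an integer with 0 ≤ k ≤ m-1, and define a = (γ^(2m) + γ^(m+6k+2) + γ^(3k+1))/(3γ^(m+3k+1)), b = (γ^(2m+3k+1) + γ^(m+6k+2) + 1)/(3γ^(m+3k+1)), c = (γ^(6k+2) + γ^(3k+1) + 1)/(3γ^(3k+1)) in F_q, and let g(x) = a·x^(2m+1) + b·x^(m+1) + c·x. Then for every integer i with 0 ≤ i ≤ m-1 one has g(γ^(3(i+k)+1)) = γ^(3i). -/

import Mathlib

/-! Write `ω = γ^m`, a primitive cube root of unity, and `u = γ^(3k+1)`. Every point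
`x = γ^(3(i+k)+1) = u γ^(3i)` satisfies `x^m = ω`, so `g x = (a ω² + b ω + c) x`. In terms of
`ω` and `u`, the numerator of `a ω² + b ω + c` over the denominator `3u` collapses to `3` by
`ω³ = 1` and `ω² + ω + 1 = 0`. Hence `g x = x / u = γ^(3i)`. -/

lemma FiniteField.three_ne_zero_of_card_mod_three {F : Type*} [Field F] [Fintype F]
    (h : Fintype.card F % 3 = 1) : (3 : F) ≠ 0 := by
  intro h3
  have hcard := FiniteField.cast_card_eq_zero F
  rw [← Nat.div_add_mod (Fintype.card F) 3, h] at hcard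
  push_cast at hcard
  simp [h3] at hcard

lemma FiniteField.isPrimitiveRoot_pow_card_sub_one_div_three {F : Type*} [Field F] [Fintype F]
    {γ : Fˣ} (hγ : ∀ x : Fˣ, x ∈ Subgroup.zpowers γ) (h : Fintype.card F % 3 = 1) :
    IsPrimitiveRoot ((γ : F) ^ ((Fintype.card F - 1) / 3)) 3 := by
  have hgen : IsPrimitiveRoot (γ : F) (Fintype.card F - 1) := by
    rw [IsPrimitiveRoot.coe_units_iff, ← Nat.card_eq_fintype_card, ← Nat.card_units,
      ← orderOf_eq_card_of_forall_mem_zpowers hγ]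
    exact IsPrimitiveRoot.orderOf γ
  have hcard : 2 ≤ Fintype.card F := Fintype.one_lt_card
  have hdvd : 3 ∣ Fintype.card F - 1 := by omega
  convert hgen.pow_of_dvd (by omega) (Nat.div_dvd_of_dvd hdvd)
  exact (Nat.div_div_self hdvd (by omega)).symm

lemma IsPrimitiveRoot.sq_add_self_add_one {R : Type*} [CommRing R] [IsDomain R] {ω : R}
    (hω : IsPrimitiveRoot ω 3) : ω ^ 2 + ω + 1 = 0 := by
  have hsum := hω.geom_sum_eq_zero (by norm_num)
  simp only [Finset.sum_range_succ, Finset.sum_range_zero] at hsum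
  linear_combination hsum

lemma pow_three_mul_add_one_pow_eq_pow {M : Type*} [Monoid M] {ζ : M} {m : ℕ}
    (h : ζ ^ (3 * m) = 1) (j : ℕ) : (ζ ^ (3 * j + 1)) ^ m = ζ ^ m := by
  rw [← pow_mul, show (3 * j + 1) * m = 3 * m * j + m by ring, pow_add, pow_mul, h, one_pow,
    one_mul]

lemma coeff_combination_eq_inv_of_sq_add_self_add_one {K : Type*} [Field K] {ω u a b c : K}
    (h3 : (3 : K) ≠ 0) (hω : ω ^ 2 + ω + 1 = 0) (hu : u ≠ 0)
    (ha : a = (ω ^ 2 + ω * u ^ 2 + u) / (3 * (ω * u)))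
    (hb : b = (ω ^ 2 * u + ω * u ^ 2 + 1) / (3 * (ω * u)))
    (hc : c = (u ^ 2 + u + 1) / (3 * u)) :
    a * ω ^ 2 + b * ω + c = u⁻¹ := by
  have hω0 : ω ≠ 0 := by rintro rfl; simp at hω
  subst ha hb hc
  field_simp
  linear_combination (ω - 1 + u ^ 2 + u) * hω

theorem stmt11_general (q m : ℕ) (F : Type*) [Field F] [Fintype F]
    (hq : Fintype.card F = q) (hq3 : q % 3 = 1)
    (hm : m = (q - 1) / 3)
    (γ : Fˣ) (hγ : ∀ x : Fˣ, x ∈ Subgroup.zpowers γ)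
    (k : ℕ)
    (a b c : F)
    (ha : a = ((γ : F)^(2*m) + (γ : F)^(m+6*k+2) + (γ : F)^(3*k+1)) / (3 * (γ : F)^(m+3*k+1)))
    (hb : b = ((γ : F)^(2*m+3*k+1) + (γ : F)^(m+6*k+2) + 1) / (3 * (γ : F)^(m+3*k+1)))
    (hc : c = ((γ : F)^(6*k+2) + (γ : F)^(3*k+1) + 1) / (3 * (γ : F)^(3*k+1)))
    (g : F → F)
    (hg : ∀ x : F, g x = a * x^(2*m+1) + b * x^(m+1) + c * x) :
    ∀ i : ℕ, i ≤ m - 1 → g ((γ : F)^(3*(i+k)+1)) = (γ : F)^(3*i) := by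
  intro i _
  subst hq
  have hω : IsPrimitiveRoot ((γ : F) ^ m) 3 :=
    hm ▸ FiniteField.isPrimitiveRoot_pow_card_sub_one_div_three hγ hq3
  have hu : (γ : F) ^ (3 * k + 1) ≠ 0 := pow_ne_zero _ γ.ne_zero
  have hx : (γ : F) ^ (3 * (i + k) + 1) = (γ : F) ^ (3 * k + 1) * (γ : F) ^ (3 * i) := by
    rw [← pow_add]; ring_nf
  have hxm := pow_three_mul_add_one_pow_eq_pow (ζ := (γ : F))
    (by rw [pow_mul', hω.pow_eq_one]) (i + k)
  have hcoeff := coeff_combination_eq_inv_of_sq_add_self_add_one (a := a) (b := b) (c := c)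
    (FiniteField.three_ne_zero_of_card_mod_three hq3) hω.sq_add_self_add_one hu
    (by rw [ha]; ring) (by rw [hb]; ring) (by rw [hc]; ring)
  calc g ((γ : F) ^ (3 * (i + k) + 1))
      = (a * ((γ : F) ^ m) ^ 2 + b * (γ : F) ^ m + c) * (γ : F) ^ (3 * (i + k) + 1) := by
        rw [hg, ← hxm]; ring
    _ = ((γ : F) ^ (3 * k + 1))⁻¹ * ((γ : F) ^ (3 * k + 1) * (γ : F) ^ (3 * i)) := by
        rw [hcoeff, hx]
    _ = (γ : F) ^ (3 * i) := inv_mul_cancel_left₀ hu _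

theorem stmt11 (q m : ℕ) (F : Type*) [Field F] [Fintype F]
    (hq : Fintype.card F = q) (hodd : Odd q) (hq3 : q % 3 = 1)
    (hm : m = (q - 1) / 3)
    (γ : Fˣ) (hγ : ∀ x : Fˣ, x ∈ Subgroup.zpowers γ)
    (k : ℕ) (hk : k ≤ m - 1)
    (a b c : F)
    (ha : a = ((γ : F)^(2*m) + (γ : F)^(m+6*k+2) + (γ : F)^(3*k+1)) / (3 * (γ : F)^(m+3*k+1)))
    (hb : b = ((γ : F)^(2*m+3*k+1) + (γ : F)^(m+6*k+2) + 1) / (3 * (γ : F)^(m+3*k+1)))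
    (hc : c = ((γ : F)^(6*k+2) + (γ : F)^(3*k+1) + 1) / (3 * (γ : F)^(3*k+1)))
    (g : F → F)
    (hg : ∀ x : F, g x = a * x^(2*m+1) + b * x^(m+1) + c * x) :
    ∀ i : ℕ, i ≤ m - 1 → g ((γ : F)^(3*(i+k)+1)) = (γ : F)^(3*i) :=
  stmt11_general q m F hq hq3 hm γ hγ k a b c ha hb hc g hg
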